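/- arXiv:2504.18323 — 4 statements merged into one kernel-verified Lean document; each statement's English description precedes it below -/
import Mathlib

section
/- For any tensors Y, Z ∈ ℝ^{n1×n2×n3}, any fixed data tensor X ∈ ℝ^{n1×n2×n3}, and any γ > 0, the Welsch loss ψ(Y) = 2γ Σ_{ijk} (1 − exp(−(Y_{ijk} − X_{ijk})²/(2γ))) is bounded above by its quadratic surrogate: ψ(Y) ≤ ψ̂(Y; Z), where ψ̂(Y; Z) = ψ(Z) + Σ_{ijk} ω(Z)_{ijk}(Y_{ijk} − X_{ijk})² − Σ_{ijk} ω(Z)_{ijk}(Z_{ijk} − X_{ijk})² and ω(Z)_{ijk} = exp(−(Z_{ijk} − X_{ijk})²/(2γ)). -/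
/-! The map `u ↦ c (1 - exp (-u / c))` is concave for `c > 0`, so it lies below each of its
tangent lines; at `u = (Z_p - X_p)²` the tangent has slope `ω(Z)_p`, and summing the tangent
bounds over all entries gives the surrogate. -/

/-- The Welsch loss ψ(Y) = 2γ Σ_p (1 − exp(−(Y_p − X_p)²/(2γ))). -/
noncomputable def welsch {n1 n2 n3 : ℕ} (γ : ℝ) (X Y : Fin n1 × Fin n2 × Fin n3 → ℝ) : ℝ :=
  2 * γ * ∑ p : Fin n1 × Fin n2 × Fin n3, (1 - Real.exp (-(Y p - X p) ^ 2 / (2 * γ)))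

/-- The exponential weight ω(Z)_p = exp(−(Z_p − X_p)²/(2γ)). -/
noncomputable def weight {n1 n2 n3 : ℕ} (γ : ℝ) (X Z : Fin n1 × Fin n2 × Fin n3 → ℝ) :
    Fin n1 × Fin n2 × Fin n3 → ℝ :=
  fun p => Real.exp (-(Z p - X p) ^ 2 / (2 * γ))

/-- The quadratic surrogate ψ̂(Y; Z). -/
noncomputable def welschSurrogate {n1 n2 n3 : ℕ} (γ : ℝ)
    (X Y Z : Fin n1 × Fin n2 × Fin n3 → ℝ) : ℝ :=
  welsch γ X Z + ∑ p : Fin n1 × Fin n2 × Fin n3, weight γ X Z p * (Y p - X p) ^ 2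
    - ∑ p : Fin n1 × Fin n2 × Fin n3, weight γ X Z p * (Z p - X p) ^ 2

open Real

theorem exp_mul_sub_add_one_le_exp (x y : ℝ) : exp y * (x - y + 1) ≤ exp x :=
  calc exp y * (x - y + 1) ≤ exp y * exp (x - y) := by
        gcongr
        exact add_one_le_exp (x - y)
    _ = exp x := by rw [← exp_add, add_sub_cancel]

theorem mul_one_sub_exp_neg_div_le_tangent {c : ℝ} (hc : 0 < c) (a b : ℝ) :
    c * (1 - exp (-a / c)) ≤ c * (1 - exp (-b / c)) + exp (-b / c) * a - exp (-b / c) * b := by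
  have htangent := mul_le_mul_of_nonneg_left (exp_mul_sub_add_one_le_exp (-a / c) (-b / c)) hc.le
  have hexpand : c * (exp (-b / c) * (-a / c - -b / c + 1))
      = exp (-b / c) * b - exp (-b / c) * a + c * exp (-b / c) := by
    field_simp
    ring
  linarith

/-- The Welsch loss is bounded above by its quadratic surrogate. -/
theorem welsch_le_surrogate {n1 n2 n3 : ℕ} (γ : ℝ) (hγ : 0 < γ)
    (X Y Z : Fin n1 × Fin n2 × Fin n3 → ℝ) :
    welsch γ X Y ≤ welschSurrogate γ X Y Z := by
  unfold welschSurrogate welsch weight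
  rw [Finset.mul_sum, Finset.mul_sum, ← Finset.sum_add_distrib, ← Finset.sum_sub_distrib]
  exact Finset.sum_le_sum fun p _ =>
    mul_one_sub_exp_neg_div_le_tangent (by positivity) ((Y p - X p) ^ 2) ((Z p - X p) ^ 2)
end

section
/- Let X ∈ ℝ^{n1×n2×n3}, γ > 0, λ > 0, and let B = {Y : max_{ijk} |Y_{ijk}| ≤ a} for some a > 0. Define Ψ(Y, L) = ‖L − Y‖²_F + λψ(Y) and Ψ̂(Y, L; Z) = ‖L − Y‖²_F + λψ̂(Y; Z). Suppose Y_t ∈ B, L_t ∈ ℝ^{n1×n2×n3}, and Y_{t+1} ∈ B satisfies Ψ̂(Y_{t+1}, L_t; Y_t) ≤ Ψ̂(Y, L_t; Y_t) for all Y ∈ B. Then Ψ(Y_{t+1}, L_t) ≤ Ψ(Y_t, L_t). -/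
/-- The objective Ψ(Y, L) = ‖L − Y‖²_F + λψ(Y). -/
noncomputable def PsiObj {n1 n2 n3 : ℕ} (γ lam : ℝ)
    (X Y L : Fin n1 × Fin n2 × Fin n3 → ℝ) : ℝ :=
  (∑ p : Fin n1 × Fin n2 × Fin n3, (L p - Y p) ^ 2) + lam * welsch γ X Y

/-- The surrogate objective Ψ̂(Y, L; Z) = ‖L − Y‖²_F + λψ̂(Y; Z). -/
noncomputable def PsiSurrogate {n1 n2 n3 : ℕ} (γ lam : ℝ)
    (X Y L Z : Fin n1 × Fin n2 × Fin n3 → ℝ) : ℝ :=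
  (∑ p : Fin n1 × Fin n2 × Fin n3, (L p - Y p) ^ 2) + lam * welschSurrogate γ X Y Z

lemma Real.exp_add_exp_mul_sub_le_exp (s t : ℝ) : Real.exp t + Real.exp t * (s - t) ≤ Real.exp s :=
  calc Real.exp t + Real.exp t * (s - t) = Real.exp t * (s - t + 1) := by ring
    _ ≤ Real.exp t * Real.exp (s - t) := by gcongr; exact Real.add_one_le_exp _
    _ = Real.exp s := by rw [← Real.exp_add, add_sub_cancel]

lemma welsch_term_le_tangent {γ : ℝ} (hγ : 0 < γ) (u v : ℝ) :
    2 * γ * (1 - Real.exp (-u ^ 2 / (2 * γ))) ≤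
      2 * γ * (1 - Real.exp (-v ^ 2 / (2 * γ)))
        + Real.exp (-v ^ 2 / (2 * γ)) * u ^ 2 - Real.exp (-v ^ 2 / (2 * γ)) * v ^ 2 := by
  set s := -u ^ 2 / (2 * γ)
  set t := -v ^ 2 / (2 * γ)
  have rescaled : u ^ 2 - v ^ 2 = -(2 * γ) * (s - t) := by
    simp only [s, t]
    field_simp
    ring
  clear_value s t
  calc 2 * γ * (1 - Real.exp s) ≤ 2 * γ * (1 - (Real.exp t + Real.exp t * (s - t))) := by
        gcongr
        exact Real.exp_add_exp_mul_sub_le_exp s t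
    _ = 2 * γ * (1 - Real.exp t) + Real.exp t * u ^ 2 - Real.exp t * v ^ 2 := by
        linear_combination -(Real.exp t) * rescaled

section

variable {n1 n2 n3 : ℕ} {γ : ℝ} (X : Fin n1 × Fin n2 × Fin n3 → ℝ)

lemma welsch_le_welschSurrogate (hγ : 0 < γ) (Y Z : Fin n1 × Fin n2 × Fin n3 → ℝ) :
    welsch γ X Y ≤ welschSurrogate γ X Y Z := by
  unfold welschSurrogate welsch weight
  rw [Finset.mul_sum, Finset.mul_sum, ← Finset.sum_add_distrib, ← Finset.sum_sub_distrib]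
  exact Finset.sum_le_sum fun p _ => welsch_term_le_tangent hγ (Y p - X p) (Z p - X p)

lemma welschSurrogate_self (Z : Fin n1 × Fin n2 × Fin n3 → ℝ) :
    welschSurrogate γ X Z Z = welsch γ X Z := by
  unfold welschSurrogate
  ring

lemma PsiObj_le_PsiSurrogate (hγ : 0 < γ) {lam : ℝ} (hlam : 0 ≤ lam)
    (Y L Z : Fin n1 × Fin n2 × Fin n3 → ℝ) :
    PsiObj γ lam X Y L ≤ PsiSurrogate γ lam X Y L Z := by
  unfold PsiObj PsiSurrogate
  gcongr
  exact welsch_le_welschSurrogate X hγ Y Z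

lemma PsiSurrogate_self (lam : ℝ) (L Z : Fin n1 × Fin n2 × Fin n3 → ℝ) :
    PsiSurrogate γ lam X Z L Z = PsiObj γ lam X Z L := by
  rw [PsiSurrogate, PsiObj, welschSurrogate_self]

end

theorem surrogate_min_descent_general {n1 n2 n3 : ℕ} (γ lam a : ℝ)
    (hγ : 0 < γ) (hlam : 0 < lam)
    (X Yt Lt Yt1 : Fin n1 × Fin n2 × Fin n3 → ℝ)
    (hYt : ∀ p, |Yt p| ≤ a)
    (hmin : ∀ Y : Fin n1 × Fin n2 × Fin n3 → ℝ, (∀ p, |Y p| ≤ a) →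
      PsiSurrogate γ lam X Yt1 Lt Yt ≤ PsiSurrogate γ lam X Y Lt Yt) :
    PsiObj γ lam X Yt1 Lt ≤ PsiObj γ lam X Yt Lt :=
  calc PsiObj γ lam X Yt1 Lt ≤ PsiSurrogate γ lam X Yt1 Lt Yt :=
        PsiObj_le_PsiSurrogate X hγ hlam.le Yt1 Lt Yt
    _ ≤ PsiSurrogate γ lam X Yt Lt Yt := hmin Yt hYt
    _ = PsiObj γ lam X Yt Lt := PsiSurrogate_self X lam Lt Yt

/-- Majorization-step descent: if `Y_{t+1}` minimizes the surrogate `Ψ̂(·, L_t; Y_t)` over the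
box `B = {Y : ‖Y‖_∞ ≤ a}` and `Y_t ∈ B`, then `Ψ(Y_{t+1}, L_t) ≤ Ψ(Y_t, L_t)`. -/
theorem surrogate_min_descent {n1 n2 n3 : ℕ} (γ lam a : ℝ)
    (hγ : 0 < γ) (hlam : 0 < lam) (ha : 0 < a)
    (X Yt Lt Yt1 : Fin n1 × Fin n2 × Fin n3 → ℝ)
    (hYt : ∀ p, |Yt p| ≤ a) (hYt1 : ∀ p, |Yt1 p| ≤ a)
    (hmin : ∀ Y : Fin n1 × Fin n2 × Fin n3 → ℝ, (∀ p, |Y p| ≤ a) →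
      PsiSurrogate γ lam X Yt1 Lt Yt ≤ PsiSurrogate γ lam X Y Lt Yt) :
    PsiObj γ lam X Yt1 Lt ≤ PsiObj γ lam X Yt Lt :=
  surrogate_min_descent_general γ lam a hγ hlam X Yt Lt Yt1 hYt hmin
end

section
/- Fix α₁ > 0, α₂ > 0, a tensor Y ∈ ℝ^{n1×n2×n3}, matrices U_{it} ∈ ℝ^{n_i×r_i} (i = 1,2,3), and a core tensor G_t ∈ ℝ^{r1×r2×r3}. Suppose U_{1,t+1} minimizes U₁ ↦ ‖(U₁, U_{2t}, U_{3t})·G_t − Y‖²_F + α₁‖U₁ − U_{1t}‖²_F, U_{2,t+1} minimizes U₂ ↦ ‖(U_{1,t+1}, U₂, U_{3t})·G_t − Y‖²_F + α₁‖U₂ − U_{2t}‖²_F, U_{3,t+1} minimizes U₃ ↦ ‖(U_{1,t+1}, U_{2,t+1}, U₃)·G_t − Y‖²_F + α₁‖U₃ − U_{3t}‖²_F, and G_{t+1} minimizes G ↦ ‖(U_{1,t+1}, U_{2,t+1}, U_{3,t+1})·G − Y‖²_F + α₂‖G − G_t‖²_F. Then, with L_t = (U_{1t}, U_{2t}, U_{3t})·G_t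 and L_{t+1} = (U_{1,t+1}, U_{2,t+1}, U_{3,t+1})·G_{t+1}, one has ‖L_{t+1} − Y‖²_F + α₁ Σ_{i=1}^{3} ‖U_{i,t+1} − U_{it}‖²_F + α₂‖G_{t+1} − G_t‖²_F ≤ ‖L_t − Y‖²_F. -/
open Matrix

/-- The Tucker multilinear action `(A₁, A₂, A₃)·G` of three matrices on a core tensor,
defined entrywise by `[(A₁, A₂, A₃)·G]_{ijk} = Σ_{a,b,c} (A₁)_{ia}(A₂)_{jb}(A₃)_{kc} G_{abc}`. -/
noncomputable def tucker {m1 m2 m3 r1 r2 r3 : ℕ}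
    (A1 : Matrix (Fin m1) (Fin r1) ℝ) (A2 : Matrix (Fin m2) (Fin r2) ℝ)
    (A3 : Matrix (Fin m3) (Fin r3) ℝ) (G : Fin r1 × Fin r2 × Fin r3 → ℝ) :
    Fin m1 × Fin m2 × Fin m3 → ℝ :=
  fun p => ∑ a, ∑ b, ∑ c, A1 p.1 a * A2 p.2.1 b * A3 p.2.2 c * G (a, b, c)

/-- Squared Frobenius norm of a matrix: the sum of squares of all entries. -/
noncomputable def frobSqM {n m : ℕ} (A : Matrix (Fin n) (Fin m) ℝ) : ℝ :=
  ∑ i, ∑ j, A i j ^ 2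

/-- Squared Frobenius norm of a tensor: the sum of squares of all entries. -/
noncomputable def frobSqT {n1 n2 n3 : ℕ} (Z : Fin n1 × Fin n2 × Fin n3 → ℝ) : ℝ :=
  ∑ p : Fin n1 × Fin n2 × Fin n3, Z p ^ 2

theorem frobSqM_zero {n m : ℕ} : frobSqM (0 : Matrix (Fin n) (Fin m) ℝ) = 0 := by
  simp [frobSqM]

theorem frobSqT_zero {n1 n2 n3 : ℕ} : frobSqT (0 : Fin n1 × Fin n2 × Fin n3 → ℝ) = 0 := by
  simp [frobSqT]

theorem pbcd_sweep_descent_general {n1 n2 n3 r1 r2 r3 : ℕ} (α1 α2 : ℝ)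
    (Y : Fin n1 × Fin n2 × Fin n3 → ℝ)
    (U1t U1n : Matrix (Fin n1) (Fin r1) ℝ) (U2t U2n : Matrix (Fin n2) (Fin r2) ℝ)
    (U3t U3n : Matrix (Fin n3) (Fin r3) ℝ) (Gt Gn : Fin r1 × Fin r2 × Fin r3 → ℝ)
    (hU1 : ∀ U1 : Matrix (Fin n1) (Fin r1) ℝ,
      frobSqT (tucker U1n U2t U3t Gt - Y) + α1 * frobSqM (U1n - U1t)
        ≤ frobSqT (tucker U1 U2t U3t Gt - Y) + α1 * frobSqM (U1 - U1t))
    (hU2 : ∀ U2 : Matrix (Fin n2) (Fin r2) ℝ,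
      frobSqT (tucker U1n U2n U3t Gt - Y) + α1 * frobSqM (U2n - U2t)
        ≤ frobSqT (tucker U1n U2 U3t Gt - Y) + α1 * frobSqM (U2 - U2t))
    (hU3 : ∀ U3 : Matrix (Fin n3) (Fin r3) ℝ,
      frobSqT (tucker U1n U2n U3n Gt - Y) + α1 * frobSqM (U3n - U3t)
        ≤ frobSqT (tucker U1n U2n U3 Gt - Y) + α1 * frobSqM (U3 - U3t))
    (hG : ∀ G : Fin r1 × Fin r2 × Fin r3 → ℝ,
      frobSqT (tucker U1n U2n U3n Gn - Y) + α2 * frobSqT (Gn - Gt)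
        ≤ frobSqT (tucker U1n U2n U3n G - Y) + α2 * frobSqT (G - Gt)) :
    frobSqT (tucker U1n U2n U3n Gn - Y)
      + α1 * (frobSqM (U1n - U1t) + frobSqM (U2n - U2t) + frobSqM (U3n - U3t))
      + α2 * frobSqT (Gn - Gt)
    ≤ frobSqT (tucker U1t U2t U3t Gt - Y) := by
  -- Each update does at least as well as keeping the old block, whose proximal term vanishes;
  -- the four resulting inequalities telescope.
  have h1 := hU1 U1t
  have h2 := hU2 U2t
  have h3 := hU3 U3t
  have h4 := hG Gt
  simp only [sub_self, frobSqM_zero, frobSqT_zero, mul_zero, add_zero] at h1 h2 h3 h4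
  linarith

/-- One sweep of proximal block coordinate descent on the Tucker factors and core decreases
the least-squares fit by at least the accumulated proximal terms. -/
theorem pbcd_sweep_descent {n1 n2 n3 r1 r2 r3 : ℕ} (α1 α2 : ℝ) (hα1 : 0 < α1) (hα2 : 0 < α2)
    (Y : Fin n1 × Fin n2 × Fin n3 → ℝ)
    (U1t U1n : Matrix (Fin n1) (Fin r1) ℝ) (U2t U2n : Matrix (Fin n2) (Fin r2) ℝ)
    (U3t U3n : Matrix (Fin n3) (Fin r3) ℝ) (Gt Gn : Fin r1 × Fin r2 × Fin r3 → ℝ)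
    (hU1 : ∀ U1 : Matrix (Fin n1) (Fin r1) ℝ,
      frobSqT (tucker U1n U2t U3t Gt - Y) + α1 * frobSqM (U1n - U1t)
        ≤ frobSqT (tucker U1 U2t U3t Gt - Y) + α1 * frobSqM (U1 - U1t))
    (hU2 : ∀ U2 : Matrix (Fin n2) (Fin r2) ℝ,
      frobSqT (tucker U1n U2n U3t Gt - Y) + α1 * frobSqM (U2n - U2t)
        ≤ frobSqT (tucker U1n U2 U3t Gt - Y) + α1 * frobSqM (U2 - U2t))
    (hU3 : ∀ U3 : Matrix (Fin n3) (Fin r3) ℝ,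
      frobSqT (tucker U1n U2n U3n Gt - Y) + α1 * frobSqM (U3n - U3t)
        ≤ frobSqT (tucker U1n U2n U3 Gt - Y) + α1 * frobSqM (U3 - U3t))
    (hG : ∀ G : Fin r1 × Fin r2 × Fin r3 → ℝ,
      frobSqT (tucker U1n U2n U3n Gn - Y) + α2 * frobSqT (Gn - Gt)
        ≤ frobSqT (tucker U1n U2n U3n G - Y) + α2 * frobSqT (G - Gt)) :
    frobSqT (tucker U1n U2n U3n Gn - Y)
      + α1 * (frobSqM (U1n - U1t) + frobSqM (U2n - U2t) + frobSqM (U3n - U3t))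
      + α2 * frobSqT (Gn - Gt)
    ≤ frobSqT (tucker U1t U2t U3t Gt - Y) :=
  pbcd_sweep_descent_general α1 α2 Y U1t U1n U2t U2n U3t U3n Gt Gn hU1 hU2 hU3 hG
end

section
/- Let X ∈ ℝ^{n1×n2×n3}, λ > 0, γ > 0, a > 0, B = {Y : max_{ijk}|Y_{ijk}| ≤ a}. Fix L_t ∈ ℝ^{n1×n2×n3} and Y_t ∈ B, set W_{t+1} = ω(Y_t), i.e., [W_{t+1}]_{ijk} = exp(−([Y_t]_{ijk} − X_{ijk})²/(2γ)). Then the tensor Y_{t+1} defined entrywise by [Y_{t+1}]_{ijk} = P((λ[W_{t+1}]_{ijk} X_{ijk} + [L_t]_{ijk}) / (λ[W_{t+1}]_{ijk} + 1)), where P clips to [−a, a], is a minimizer over B of the surrogate Ψ̂(Y, L_t; Y_t) = ‖L_t − Y‖²_F + λψ̂(Y; Y_t). -/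
/-- Projection (clipping) of a real number onto the interval `[-a, a]`. -/
def clip (a t : ℝ) : ℝ := max (-a) (min a t)

lemma abs_clip_le {a : ℝ} (ha : 0 ≤ a) (t : ℝ) : |clip a t| ≤ a :=
  abs_le.mpr ⟨le_max_left _ _, max_le (by linarith) (min_le_left _ _)⟩

lemma sq_clip_sub_le {a y : ℝ} (hy : |y| ≤ a) (t : ℝ) : (clip a t - t) ^ 2 ≤ (y - t) ^ 2 := by
  obtain ⟨hy₁, hy₂⟩ := abs_le.mp hy
  unfold clip
  rcases le_total a t with hat | hta
  · rw [min_eq_left hat, max_eq_right (by linarith)]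
    nlinarith
  rcases le_total t (-a) with hta' | hat'
  · rw [min_eq_right hta, max_eq_left hta']
    nlinarith
  · rw [min_eq_right hta, max_eq_right hat', sub_self]
    simpa using sq_nonneg (y - t)

lemma sq_add_mul_sq_eq {c : ℝ} (hc : c + 1 ≠ 0) (L X u : ℝ) :
    (L - u) ^ 2 + c * (u - X) ^ 2
      = (c + 1) * (u - (c * X + L) / (c + 1)) ^ 2 + c * (L - X) ^ 2 / (c + 1) := by
  field_simp
  ring

lemma sq_add_mul_sq_clip_le {c a y : ℝ} (hc : 0 < c + 1) (hy : |y| ≤ a) (L X : ℝ) :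
    (L - clip a ((c * X + L) / (c + 1))) ^ 2 + c * (clip a ((c * X + L) / (c + 1)) - X) ^ 2
      ≤ (L - y) ^ 2 + c * (y - X) ^ 2 := by
  rw [sq_add_mul_sq_eq hc.ne', sq_add_mul_sq_eq hc.ne']
  gcongr ?_ + _
  exact mul_le_mul_of_nonneg_left (sq_clip_sub_le hy _) hc.le

lemma PsiSurrogate_eq_sum_add {n1 n2 n3 : ℕ} (γ lam : ℝ)
    (X Y L Z : Fin n1 × Fin n2 × Fin n3 → ℝ) :
    PsiSurrogate γ lam X Y L Z
      = (∑ p, ((L p - Y p) ^ 2 + lam * weight γ X Z p * (Y p - X p) ^ 2))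
        + lam * (welsch γ X Z - ∑ p, weight γ X Z p * (Z p - X p) ^ 2) := by
  rw [PsiSurrogate, welschSurrogate, Finset.sum_add_distrib]
  simp only [mul_assoc, ← Finset.mul_sum]
  ring

lemma PsiSurrogate_le_of_forall {n1 n2 n3 : ℕ} {γ lam : ℝ}
    {X Y Y' L Z : Fin n1 × Fin n2 × Fin n3 → ℝ}
    (h : ∀ p, (L p - Y p) ^ 2 + lam * weight γ X Z p * (Y p - X p) ^ 2
      ≤ (L p - Y' p) ^ 2 + lam * weight γ X Z p * (Y' p - X p) ^ 2) :
    PsiSurrogate γ lam X Y L Z ≤ PsiSurrogate γ lam X Y' L Z := by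
  rw [PsiSurrogate_eq_sum_add, PsiSurrogate_eq_sum_add]
  gcongr ?_ + _
  exact Finset.sum_le_sum fun p _ => h p

theorem clipped_update_minimizes_surrogate_general {n1 n2 n3 : ℕ} (γ lam a : ℝ)
    (hlam : 0 < lam) (ha : 0 < a)
    (X Lt Yt Wt1 Yt1 : Fin n1 × Fin n2 × Fin n3 → ℝ)
    (hW : ∀ p, Wt1 p = Real.exp (-(Yt p - X p) ^ 2 / (2 * γ)))
    (hYt1 : ∀ p, Yt1 p = clip a ((lam * Wt1 p * X p + Lt p) / (lam * Wt1 p + 1))) :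
    (∀ p, |Yt1 p| ≤ a) ∧
    ∀ Y : Fin n1 × Fin n2 × Fin n3 → ℝ, (∀ p, |Y p| ≤ a) →
      PsiSurrogate γ lam X Yt1 Lt Yt ≤ PsiSurrogate γ lam X Y Lt Yt := by
  refine ⟨fun p => hYt1 p ▸ abs_clip_le ha.le _, fun Y hY => PsiSurrogate_le_of_forall fun p => ?_⟩
  have hweight : weight γ X Yt p = Wt1 p := (hW p).symm
  have hc : 0 < lam * Wt1 p + 1 := by
    rw [hW p]
    positivity
  rw [hweight, hYt1 p]
  exact sq_add_mul_sq_clip_le hc (hY p) (Lt p) (X p)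

/-- The closed-form clipped update `[Y_{t+1}]_p = P((λ[W_{t+1}]_p X_p + [L_t]_p)/(λ[W_{t+1}]_p + 1))`,
with weights `[W_{t+1}]_p = exp(−([Y_t]_p − X_p)²/(2γ))`, is a minimizer over the box
`B = {Y : ‖Y‖_∞ ≤ a}` of the surrogate `Ψ̂(Y, L_t; Y_t) = ‖L_t − Y‖²_F + λψ̂(Y; Y_t)`. -/
theorem clipped_update_minimizes_surrogate {n1 n2 n3 : ℕ} (γ lam a : ℝ)
    (hγ : 0 < γ) (hlam : 0 < lam) (ha : 0 < a)
    (X Lt Yt Wt1 Yt1 : Fin n1 × Fin n2 × Fin n3 → ℝ)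
    (hYt : ∀ p, |Yt p| ≤ a)
    (hW : ∀ p, Wt1 p = Real.exp (-(Yt p - X p) ^ 2 / (2 * γ)))
    (hYt1 : ∀ p, Yt1 p = clip a ((lam * Wt1 p * X p + Lt p) / (lam * Wt1 p + 1))) :
    (∀ p, |Yt1 p| ≤ a) ∧
    ∀ Y : Fin n1 × Fin n2 × Fin n3 → ℝ, (∀ p, |Y p| ≤ a) →
      PsiSurrogate γ lam X Yt1 Lt Yt ≤ PsiSurrogate γ lam X Y Lt Yt :=
  clipped_update_minimizes_surrogate_general γ lam a hlam ha X Lt Yt Wt1 Yt1 hW hYt1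
end
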